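/- Let f and g be normalized cuspidal Hecke eigenforms of weights k₁ ≠ k₂ on Γ₀(N). Then there exists n ≤ 4·(log(N) + 1)² such that a_n(f) ≠ a_n(g). -/

import Mathlib

/-!
If `f` and `g` agree at a prime `p ∤ N`, the recurrences give
`f (p²) - g (p²) = p ^ (k₂ - 1) - p ^ (k₁ - 1) ≠ 0`, so `f` and `g` differ at `p` or at `p²`.
It remains to find such a prime with `p ≤ 2 log N + 2`. For the least prime `p` not dividing `N`
we have `(p - 1)# ∣ N`, so this follows from the Chebyshev-type bound `θ n ≥ (n - 1) / 2`.
For large `n` that bound comes from Erdős's estimate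
`4 ^ m ≤ 2m · (2m) ^ π(√(2m)) · (2m)#` of the central binomial coefficient;
for `n ≤ 403` it is certified by a chain of explicit primorials.
-/

open Finset Real
open scoped Nat.Prime Chebyshev

namespace Nat

theorem primeCounting_le_div_two_add_one (n : ℕ) : π n ≤ n / 2 + 1 := by
  obtain hn | hn := lt_or_ge n 2
  · interval_cases n <;> simp
  · obtain ⟨k, rfl⟩ := exists_add_of_le hn
    have h := primeCounting_add_le two_ne_zero le_rfl k
    rw [totient_two, show π 2 = 1 by decide] at h
    omega

theorem centralBinom_le_pow_primeCounting_mul_primorial {n : ℕ} (hn : 0 < n) :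
    centralBinom n ≤ (2 * n) ^ π (sqrt (2 * n)) * primorial (2 * n) := by
  set S := {p ∈ range (2 * n + 1) | p.Prime}
  set f : ℕ → ℕ := fun p => p ^ (centralBinom n).factorization p
  have hprod : ∏ p ∈ S, f p = centralBinom n := by
    rw [prod_filter_of_ne fun p _ h => ?_]
    · exact n.prod_pow_factorization_centralBinom
    · contrapose! h
      simp [f, factorization_eq_zero_of_not_prime _ h]
  rw [← hprod, ← prod_filter_mul_prod_filter_not S (· ≤ sqrt (2 * n))]
  gcongr ?_ * ?_
  · calc ∏ p ∈ S with p ≤ sqrt (2 * n), f p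
        ≤ ∏ p ∈ S with p ≤ sqrt (2 * n), 2 * n :=
          prod_le_prod' fun p _ => pow_factorization_choose_le (by omega)
      _ ≤ (2 * n) ^ π (sqrt (2 * n)) := by
          rw [prod_const, ← primesLE_card_eq_primeCounting]
          refine pow_le_pow_right₀ (by omega) (card_le_card fun p hp => ?_)
          simp only [S, mem_filter, mem_range] at hp
          exact mem_primesLE.2 ⟨hp.2, hp.1.2⟩
  · calc ∏ p ∈ S with ¬p ≤ sqrt (2 * n), f p
        ≤ ∏ p ∈ S with ¬p ≤ sqrt (2 * n), p := by
          refine prod_le_prod' fun p hp => ?_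
          simp only [S, mem_filter] at hp
          refine (pow_le_pow_right₀ hp.1.2.one_lt.le ?_).trans (pow_one p).le
          exact factorization_choose_le_one (sqrt_lt'.mp (not_le.mp hp.2))
      _ ≤ ∏ p ∈ S, p :=
          prod_le_prod_of_subset_of_one_le' (filter_subset _ _)
            fun p hp _ => (mem_filter.1 hp).2.one_lt.le

theorem four_pow_le_pow_mul_primorial {n : ℕ} (hn : 0 < n) :
    4 ^ n ≤ (2 * n) ^ (π (sqrt (2 * n)) + 1) * primorial (2 * n) :=
  calc 4 ^ n ≤ 2 * n * centralBinom n := four_pow_le_two_mul_self_mul_centralBinom n hn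
    _ ≤ 2 * n * ((2 * n) ^ π (sqrt (2 * n)) * primorial (2 * n)) :=
      Nat.mul_le_mul_left _ (centralBinom_le_pow_primeCounting_mul_primorial hn)
    _ = (2 * n) ^ (π (sqrt (2 * n)) + 1) * primorial (2 * n) := by ring

end Nat

theorem add_four_mul_log_le_of_twenty_le {u : ℝ} (hu : 20 ≤ u) :
    (u + 4) * log u ≤ (log 2 - 1 / 2) * u ^ 2 := by
  -- the tangent line of `log` at `16`
  have hlog : log u ≤ u / 16 + 4 * log 2 - 1 := by
    have h := log_le_sub_one_of_pos (x := u / 16) (by positivity)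
    rw [log_div (by positivity) (by norm_num), show (16 : ℝ) = 2 ^ 4 by norm_num, log_pow] at h
    push_cast at h
    linarith
  have := log_two_gt_d9
  have := log_two_lt_d9
  nlinarith [mul_le_mul_of_nonneg_left hlog (by linarith : (0 : ℝ) ≤ u + 4)]

namespace Chebyshev

theorem le_theta_two_mul {m : ℕ} (hm : 200 ≤ m) : (m : ℝ) ≤ θ (2 * m) := by
  set u := √(2 * m : ℝ)
  have hu2 : u ^ 2 = 2 * m := sq_sqrt (by positivity)
  have hu : 20 ≤ u := le_sqrt_of_sq_le (by norm_num; exact_mod_cast (by omega : 400 ≤ 2 * m))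
  have hπ : ((π (Nat.sqrt (2 * m)) + 1 : ℕ) : ℝ) ≤ u / 2 + 2 := by
    have h1 : (π (Nat.sqrt (2 * m)) : ℝ) ≤ ((Nat.sqrt (2 * m) / 2 : ℕ) : ℝ) + 1 := by
      exact_mod_cast Nat.primeCounting_le_div_two_add_one _
    have h2 : ((Nat.sqrt (2 * m) / 2 : ℕ) : ℝ) ≤ (Nat.sqrt (2 * m) : ℝ) / 2 := Nat.cast_div_le
    have h3 : (Nat.sqrt (2 * m) : ℝ) ≤ u := by
      have h := Real.nat_sqrt_le_real_sqrt (a := 2 * m)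
      push_cast at h
      exact h
    push_cast
    linarith
  have hpow : (4 : ℝ) ^ m ≤ (2 * m : ℝ) ^ (π (Nat.sqrt (2 * m)) + 1) * primorial (2 * m) := by
    exact_mod_cast Nat.four_pow_le_pow_mul_primorial (n := m) (by omega)
  have hlog := log_le_log (by positivity) hpow
  rw [log_mul (by positivity) (by exact_mod_cast (primorial_pos _).ne'), log_pow, log_pow] at hlog
  have hθ : θ (2 * m) = log (primorial (2 * m)) := by
    rw [theta_eq_log_primorial, show (2 * m : ℝ) = ((2 * m : ℕ) : ℝ) by push_cast; ring,
      Nat.floor_natCast]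
  have hlog2m : log (2 * m) = 2 * log u := by
    rw [← hu2, log_pow]; push_cast; ring
  have hlog4 : log 4 = 2 * log 2 := by
    rw [show (4 : ℝ) = 2 ^ 2 by norm_num, log_pow]; push_cast; ring
  have hlog2m_nonneg : 0 ≤ log (2 * m : ℝ) := log_nonneg (by exact_mod_cast (by omega : 1 ≤ 2 * m))
  have hπlog := mul_le_mul_of_nonneg_right hπ hlog2m_nonneg
  have key := add_four_mul_log_le_of_twenty_le hu
  have hm : (m : ℝ) = u ^ 2 / 2 := by linarith
  rw [hlog2m] at hπlog
  rw [hlog2m, hlog4, hm] at hlog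
  rw [hθ, hm]
  linarith

theorem sub_one_le_two_mul_theta_of_chain {a b c : ℕ} (hab : 3 ^ (b - 1) ≤ primorial a ^ 2)
    (hac : a ≤ c + 1) (h : ∀ n ≤ c, (n : ℝ) - 1 ≤ 2 * θ n) :
    ∀ n ≤ b, (n : ℝ) - 1 ≤ 2 * θ n := by
  intro n hnb
  obtain hnc | han := le_or_gt n c
  · exact h n hnc
  have hθa : ((b - 1 : ℕ) : ℝ) * log 3 ≤ 2 * θ a := by
    have h3 := log_le_log (by positivity)
      (by exact_mod_cast hab : (3 : ℝ) ^ (b - 1) ≤ (primorial a : ℝ) ^ 2)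
    rwa [log_pow, log_pow, ← Nat.floor_natCast (R := ℝ) a, ← theta_eq_log_primorial] at h3
  have hlog3 : 1 ≤ log 3 := by
    rw [le_log_iff_exp_le (by norm_num)]
    linarith [exp_one_lt_d9]
  have hθ : θ a ≤ θ n := theta_mono (by exact_mod_cast (by omega : a ≤ n))
  have hb : (n : ℝ) - 1 ≤ ((b - 1 : ℕ) : ℝ) := by
    rw [Nat.cast_sub (by omega)]
    push_cast
    linarith [(by exact_mod_cast hnb : (n : ℝ) ≤ b)]
  nlinarith [Nat.cast_nonneg (α := ℝ) (b - 1)]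

theorem sub_one_le_two_mul_theta_of_le_403 : ∀ n : ℕ, n ≤ 403 → (n : ℝ) - 1 ≤ 2 * θ n :=
  sub_one_le_two_mul_theta_of_chain (a := 239) (b := 403) (by decide +kernel) (by norm_num) <|
  sub_one_le_two_mul_theta_of_chain (a := 196) (b := 325) (by decide +kernel) (by norm_num) <|
  sub_one_le_two_mul_theta_of_chain (a := 121) (b := 195) (by decide +kernel) (by norm_num) <|
  sub_one_le_two_mul_theta_of_chain (a := 76) (b := 120) (by decide +kernel) (by norm_num) <|
  sub_one_le_two_mul_theta_of_chain (a := 49) (b := 75) (by decide +kernel) (by norm_num) <|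
  sub_one_le_two_mul_theta_of_chain (a := 31) (b := 48) (by decide +kernel) (by norm_num) <|
  sub_one_le_two_mul_theta_of_chain (a := 20) (b := 30) (by decide +kernel) (by norm_num) <|
  sub_one_le_two_mul_theta_of_chain (a := 16) (b := 19) (by decide +kernel) (by norm_num) <|
  sub_one_le_two_mul_theta_of_chain (a := 11) (b := 15) (by decide +kernel) (by norm_num) <|
  sub_one_le_two_mul_theta_of_chain (a := 8) (b := 10) (by decide +kernel) (by norm_num) <|
  sub_one_le_two_mul_theta_of_chain (a := 5) (b := 7) (by decide +kernel) (by norm_num) <|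
  sub_one_le_two_mul_theta_of_chain (a := 3) (b := 4) (by decide +kernel) (by norm_num) <|
  sub_one_le_two_mul_theta_of_chain (a := 2) (b := 2) (by decide +kernel) (by norm_num) <|
  fun (n : ℕ) (hn : n ≤ 1) => by
    have : (n : ℝ) ≤ 1 := by exact_mod_cast hn
    linarith [theta_nonneg n]

theorem sub_one_le_two_mul_theta (n : ℕ) : (n : ℝ) - 1 ≤ 2 * θ n := by
  obtain hn | hn := le_or_gt n 403
  · exact sub_one_le_two_mul_theta_of_le_403 n hn
  have hm := le_theta_two_mul (m := n / 2) (by omega)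
  have hθ : θ (2 * (n / 2 : ℕ)) ≤ θ n :=
    theta_mono (by exact_mod_cast (by omega : 2 * (n / 2) ≤ n))
  have hn2 : (n : ℝ) ≤ 2 * (n / 2 : ℕ) + 1 := by exact_mod_cast (by omega : n ≤ 2 * (n / 2) + 1)
  linarith

end Chebyshev

namespace Nat

theorem primorial_dvd_of_forall_prime_le_dvd {n N : ℕ} (h : ∀ p, p.Prime → p ≤ n → p ∣ N) :
    primorial n ∣ N :=
  prod_primes_dvd N (fun _ hp => (mem_filter.1 hp).2.prime)
    fun p hp => h p (mem_filter.1 hp).2 <|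
      Order.lt_add_one_iff.1 (mem_range.1 (mem_filter.1 hp).1)

theorem exists_prime_not_dvd_le_two_mul_log_add_two {N : ℕ} (hN : N ≠ 0) :
    ∃ p, p.Prime ∧ ¬p ∣ N ∧ (p : ℝ) ≤ 2 * Real.log N + 2 := by
  classical
  have hex : ∃ p, p.Prime ∧ ¬p ∣ N := by
    obtain ⟨p, hNp, hp⟩ := exists_infinite_primes (N + 1)
    exact ⟨p, hp, fun hpN => by have := le_of_dvd (pos_of_ne_zero hN) hpN; omega⟩
  set p := Nat.find hex
  obtain ⟨hp, hpN⟩ : p.Prime ∧ ¬p ∣ N := Nat.find_spec hex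
  refine ⟨p, hp, hpN, ?_⟩
  have hdvd : primorial (p - 1) ∣ N :=
    primorial_dvd_of_forall_prime_le_dvd fun q hq hqp => by
      by_contra hqN
      exact Nat.find_min hex (by have := hp.two_le; omega) ⟨hq, hqN⟩
  have hθ : θ ((p - 1 : ℕ) : ℝ) ≤ Real.log N := by
    rw [Chebyshev.theta_eq_log_primorial, floor_natCast]
    exact Real.log_le_log (by exact_mod_cast primorial_pos _)
      (by exact_mod_cast le_of_dvd (pos_of_ne_zero hN) hdvd)
  have hp1 := Chebyshev.sub_one_le_two_mul_theta (p - 1)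
  rw [cast_sub hp.one_le, cast_one] at hp1 hθ
  linarith

end Nat

theorem apply_ne_or_apply_sq_ne {R : Type*} [CommRing R] [CharZero R] {f g : ℕ → R} {p a b : ℕ}
    (hp : 1 < p) (hab : a ≠ b) (hf : f (p ^ 2) = f p ^ 2 - (p : R) ^ a)
    (hg : g (p ^ 2) = g p ^ 2 - (p : R) ^ b) : f p ≠ g p ∨ f (p ^ 2) ≠ g (p ^ 2) := by
  by_contra! h
  have hpow : ((p ^ a : ℕ) : R) = ((p ^ b : ℕ) : R) := by
    push_cast
    linear_combination hf - hg - h.2 + (f p + g p) * h.1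
  exact hab (Nat.pow_right_injective hp (Nat.cast_injective hpow))

theorem stmt_11_general (N k₁ k₂ : ℕ) (hN : 0 < N)
    (hk₁ : 0 < k₁) (hk₂ : 0 < k₂) (hk : k₁ ≠ k₂)
    (f g : ℕ → ℂ)
    (hf : ∀ p : ℕ, p.Prime → ¬ p ∣ N → f (p ^ 2) = f p ^ 2 - (p : ℂ) ^ (k₁ - 1))
    (hg : ∀ p : ℕ, p.Prime → ¬ p ∣ N → g (p ^ 2) = g p ^ 2 - (p : ℂ) ^ (k₂ - 1)) :
    ∃ n : ℕ, (n : ℝ) ≤ 4 * (Real.log N + 1) ^ 2 ∧ f n ≠ g n := by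
  obtain ⟨p, hp, hpN, hple⟩ := Nat.exists_prime_not_dvd_le_two_mul_log_add_two hN.ne'
  have hlogN : 0 ≤ Real.log N := Real.log_nonneg (by exact_mod_cast hN)
  have hp0 : (0 : ℝ) ≤ p := p.cast_nonneg
  rcases apply_ne_or_apply_sq_ne hp.one_lt (by omega) (hf p hp hpN) (hg p hp hpN) with h | h
  · exact ⟨p, by nlinarith, h⟩
  · exact ⟨p ^ 2, by push_cast; nlinarith, h⟩

theorem stmt_11 (N k₁ k₂ : ℕ) (hN : 0 < N)
    (hk₁ : 0 < k₁) (hk₂ : 0 < k₂) (hk : k₁ ≠ k₂)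
    (f g : ℕ → ℂ) (hf1 : f 1 = 1) (hg1 : g 1 = 1)
    (hf : ∀ p : ℕ, p.Prime → ¬ p ∣ N → f (p ^ 2) = f p ^ 2 - (p : ℂ) ^ (k₁ - 1))
    (hg : ∀ p : ℕ, p.Prime → ¬ p ∣ N → g (p ^ 2) = g p ^ 2 - (p : ℂ) ^ (k₂ - 1)) :
    ∃ n : ℕ, (n : ℝ) ≤ 4 * (Real.log N + 1) ^ 2 ∧ f n ≠ g n :=
  stmt_11_general N k₁ k₂ hN hk₁ hk₂ hk f g hf hg
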